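/- arXiv:1209.1880 — 7 statements merged into one kernel-verified Lean document; each statement's English description precedes it below -/
import Mathlib

section
/- Let a and b be relatively prime positive integers and let S = ⟨a, b⟩. Then μ_S(x) = μ_S(x − ab) for every integer x ∉ {0, a, b, a + b}. -/
open Classical in
/-- The Möbius function of the locally finite poset `(ℤ, ≤_S)` where `x ≤_S y ↔ y - x ∈ S`. -/
noncomputable def mobius2 (S : Set ℤ) (a b : ℤ) : ℤ :=
  if a = b then 1
  else if b - a ∈ S then
    - ∑ c ∈ (Finset.Ico a b).attach,
        (if ((c : ℤ) - a ∈ S ∧ b - (c : ℤ) ∈ S) then mobius2 S a (c : ℤ) else 0)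
  else 0
termination_by (b - a).toNat
decreasing_by
  have := c.2
  rw [Finset.mem_Ico] at this
  omega

/-- The reduced Möbius function `μ_S(x) = μ_S(0, x)`. -/
noncomputable def mobiusRed (S : Set ℤ) (x : ℤ) : ℤ := mobius2 S 0 x

open Classical Finset


noncomputable def chiS (S : Set ℤ) (y : ℤ) : ℤ := if y ∈ S then 1 else 0

noncomputable def eE (a b y : ℤ) : ℤ := if 0 ≤ y ∧ (a * b) ∣ y then 1 else 0

noncomputable def fF (a b y : ℤ) : ℤ :=
  eE a b y - eE a b (y - a) - eE a b (y - b) + eE a b (y - a - b)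

lemma memS_iff {a b : ℤ} {S : Set ℤ}
    (hS : S = {z : ℤ | ∃ m n : ℕ, z = (m : ℤ) * a + (n : ℤ) * b}) (z : ℤ) :
    z ∈ S ↔ ∃ m n : ℤ, 0 ≤ m ∧ 0 ≤ n ∧ z = m * a + n * b := by
  subst hS
  simp only [Set.mem_setOf_eq]
  constructor
  · rintro ⟨m, n, rfl⟩
    exact ⟨m, n, Int.natCast_nonneg m, Int.natCast_nonneg n, rfl⟩
  · rintro ⟨m, n, hm, hn, rfl⟩
    exact ⟨m.toNat, n.toNat, by rw [Int.toNat_of_nonneg hm, Int.toNat_of_nonneg hn]⟩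

lemma S_nonneg {a b : ℤ} {S : Set ℤ} (ha : 0 < a) (hb : 0 < b)
    (hS : S = {z : ℤ | ∃ m n : ℕ, z = (m : ℤ) * a + (n : ℤ) * b}) {z : ℤ}
    (hz : z ∈ S) : 0 ≤ z := by
  rw [memS_iff hS] at hz
  obtain ⟨m, n, hm, hn, rfl⟩ := hz
  positivity

lemma chiS_neg {a b : ℤ} {S : Set ℤ} (ha : 0 < a) (hb : 0 < b)
    (hS : S = {z : ℤ | ∃ m n : ℕ, z = (m : ℤ) * a + (n : ℤ) * b}) {z : ℤ}
    (hz : z < 0) : chiS S z = 0 := by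
  rw [chiS, if_neg]
  intro h
  exact absurd (S_nonneg ha hb hS h) (by omega)

-- Apéry characterization: x ∈ S and x - a ∉ S iff x = i*b for some 0 ≤ i < a
lemma apery {a b : ℤ} {S : Set ℤ} (ha : 0 < a) (hb : 0 < b) (hab : Int.gcd a b = 1)
    (hS : S = {z : ℤ | ∃ m n : ℕ, z = (m : ℤ) * a + (n : ℤ) * b}) (x : ℤ) :
    (x ∈ S ∧ x - a ∉ S) ↔ ∃ i : ℤ, 0 ≤ i ∧ i < a ∧ x = i * b := by
  have hcop : IsCoprime a b := Int.isCoprime_iff_gcd_eq_one.2 hab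
  constructor
  · rintro ⟨hx, hxa⟩
    rw [memS_iff hS] at hx
    obtain ⟨m, n, hm, hn, rfl⟩ := hx
    set q := n / a with hq
    set i := n % a with hi
    have hia : 0 ≤ i ∧ i < a := ⟨Int.emod_nonneg n (by omega), Int.emod_lt_of_pos n ha⟩
    have hnq : n = a * q + i := (Int.mul_ediv_add_emod n a).symm
    have hq0 : 0 ≤ q := by
      rcases lt_or_ge q 0 with h | h
      · nlinarith [hia.1, hia.2]
      · exact h
    have hrw : m * a + n * b = (m + q * b) * a + i * b := by rw [hnq]; ring
    have hmqb : 0 ≤ m + q * b := by positivity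
    refine ⟨i, hia.1, hia.2, ?_⟩
    rcases eq_or_lt_of_le hmqb with h0 | h0
    · rw [hrw, ← h0]; ring
    · exfalso
      apply hxa
      rw [memS_iff hS]
      exact ⟨m + q * b - 1, i, by omega, hia.1, by rw [hrw]; ring⟩
  · rintro ⟨i, hi0, hia, rfl⟩
    constructor
    · rw [memS_iff hS]; exact ⟨0, i, le_refl 0, hi0, by ring⟩
    · rw [memS_iff hS]
      rintro ⟨m, n, hm, hn, hmn⟩
      have key : (i - n) * b = (m + 1) * a := by linarith
      have hdvd : a ∣ (i - n) * b := ⟨m + 1, by linarith⟩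
      have hdvd2 : a ∣ (i - n) := hcop.dvd_of_dvd_mul_right hdvd
      have hpos : 0 < (i - n) * b := by nlinarith
      have h1 : 0 < i - n := by nlinarith
      have h2 : a ≤ i - n := Int.le_of_dvd h1 hdvd2
      omega

lemma step_a {a b : ℤ} {S : Set ℤ} (ha : 0 < a) (hb : 0 < b) (hab : Int.gcd a b = 1)
    (hS : S = {z : ℤ | ∃ m n : ℕ, z = (m : ℤ) * a + (n : ℤ) * b}) (x : ℤ) :
    chiS S x - chiS S (x - a) =
      if ∃ i : ℤ, 0 ≤ i ∧ i < a ∧ x = i * b then 1 else 0 := by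
  have hup : x - a ∈ S → x ∈ S := by
    rw [memS_iff hS, memS_iff hS]
    rintro ⟨m, n, hm, hn, h⟩
    exact ⟨m + 1, n, by omega, hn, by linarith⟩
  by_cases h1 : x ∈ S <;> by_cases h2 : x - a ∈ S <;>
    simp only [chiS, h1, h2, if_true, if_false, sub_self, sub_zero, zero_sub]
  · rw [if_neg]
    intro hB
    exact ((apery ha hb hab hS x).2 hB).2 h2
  · rw [if_pos ((apery ha hb hab hS x).1 ⟨h1, h2⟩)]
  · exact absurd (hup h2) h1
  · rw [if_neg]
    intro hB
    exact h1 ((apery ha hb hab hS x).2 hB).1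

lemma keyL {a b : ℤ} {S : Set ℤ} (ha : 0 < a) (hb : 0 < b) (hab : Int.gcd a b = 1)
    (hS : S = {z : ℤ | ∃ m n : ℕ, z = (m : ℤ) * a + (n : ℤ) * b}) (x : ℤ) :
    chiS S x - chiS S (x - a) - chiS S (x - b) + chiS S (x - a - b) =
      (if x = 0 then 1 else 0) - (if x = a * b then 1 else 0) := by
  have h1 := step_a ha hb hab hS x
  have h2 := step_a ha hb hab hS (x - b)
  have hre : x - b - a = x - a - b := by ring
  rw [hre] at h2
  have lhs_eq : chiS S x - chiS S (x - a) - chiS S (x - b) + chiS S (x - a - b)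
      = (chiS S x - chiS S (x - a)) - (chiS S (x - b) - chiS S (x - a - b)) := by ring
  rw [lhs_eq, h1, h2]
  by_cases hx0 : x = 0
  · subst hx0
    have e1 : ∃ i : ℤ, 0 ≤ i ∧ i < a ∧ (0:ℤ) = i * b := ⟨0, le_refl 0, ha, by ring⟩
    have e2 : ¬∃ i : ℤ, 0 ≤ i ∧ i < a ∧ (0:ℤ) - b = i * b := by
      rintro ⟨i, hi0, hia, hib⟩; nlinarith
    have e3 : ¬((0:ℤ) = a * b) := by intro h; nlinarith
    rw [if_pos e1, if_neg e2, if_pos rfl, if_neg e3]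
  · by_cases hxab : x = a * b
    · subst hxab
      have e1 : ¬∃ i : ℤ, 0 ≤ i ∧ i < a ∧ a * b = i * b := by
        rintro ⟨i, hi0, hia, hib⟩
        have : i = a := by
          have := mul_right_cancel₀ (by omega : b ≠ 0) hib.symm
          omega
        omega
      have e2 : ∃ i : ℤ, 0 ≤ i ∧ i < a ∧ a * b - b = i * b :=
        ⟨a - 1, by omega, by omega, by ring⟩
      rw [if_neg e1, if_pos e2, if_neg hx0, if_pos rfl]
    · rw [if_neg hx0, if_neg hxab]
      by_cases hB : ∃ i : ℤ, 0 ≤ i ∧ i < a ∧ x = i * b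
      · obtain ⟨i, hi0, hia, rfl⟩ := hB
        have hi1 : i ≠ 0 := by rintro rfl; simp at hx0
        rw [if_pos ⟨i, hi0, hia, rfl⟩, if_pos ⟨i - 1, by omega, by omega, by ring⟩]
        ring
      · rw [if_neg hB, if_neg]
        rintro ⟨j, hj0, hja, hjb⟩
        have hx : x = (j + 1) * b := by linarith
        have : j + 1 < a := by
          rcases eq_or_lt_of_le (by omega : j + 1 ≤ a) with h | h
          · exact absurd (by rw [hx, ← h]) hxab
          · exact h
        exact hB ⟨j + 1, by omega, this, hx⟩

lemma reindex {a b : ℤ} {S : Set ℤ} (ha : 0 < a) (hb : 0 < b)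
    (hS : S = {z : ℤ | ∃ m n : ℕ, z = (m : ℤ) * a + (n : ℤ) * b})
    {s0 x : ℤ} (hs0 : 0 ≤ s0) {N : ℕ} (hN : x < (N : ℤ) * (a * b)) :
    ∑ c ∈ Icc 0 x, eE a b (c - s0) * chiS S (x - c)
      = ∑ k ∈ range N, chiS S (x - s0 - (k : ℤ) * (a * b)) := by
  have hab0 : 0 < a * b := by positivity
  have P1 : ∀ c ∈ Icc 0 x, eE a b (c - s0) * chiS S (x - c)
      = ∑ k ∈ range N, if c = s0 + (k : ℤ) * (a * b) then chiS S (x - c) else 0 := by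
    intro c hc
    rw [mem_Icc] at hc
    by_cases h : 0 ≤ c - s0 ∧ (a * b) ∣ c - s0
    · obtain ⟨k, hk⟩ := h.2
      have hk0 : 0 ≤ k := by
        by_contra hcon
        push_neg at hcon
        nlinarith [h.1]
      have hkN : k < (N : ℤ) := by
        by_contra hcon
        push_neg at hcon
        nlinarith [hc.2, h.1, hs0, mul_le_mul_of_nonneg_left hcon (le_of_lt hab0)]
      rw [eE, if_pos h, one_mul]
      rw [Finset.sum_eq_single_of_mem k.toNat (mem_range.2 (by omega))]
      · rw [if_pos (by rw [Int.toNat_of_nonneg hk0]; linarith)]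
      · intro j hj hne
        rw [if_neg]
        intro hcj
        apply hne
        have : (j : ℤ) * (a * b) = k * (a * b) := by linarith
        have hjk : (j : ℤ) = k := by
          exact mul_right_cancel₀ (by omega) this
        omega
    · rw [eE, if_neg h, zero_mul]
      symm
      apply Finset.sum_eq_zero
      intro j hj
      rw [if_neg]
      intro hcj
      apply h
      constructor
      · have : c - s0 = (j : ℤ) * (a * b) := by linarith
        rw [this]; positivity
      · exact ⟨j, by linarith⟩
  rw [Finset.sum_congr rfl P1, Finset.sum_comm]
  apply Finset.sum_congr rfl
  intro k _
  rw [Finset.sum_ite_eq' (Icc 0 x) (s0 + (k : ℤ) * (a * b)) (fun c => chiS S (x - c))]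
  by_cases hmem : s0 + (k : ℤ) * (a * b) ∈ Icc 0 x
  · rw [if_pos hmem]
    congr 1
    ring
  · rw [if_neg hmem]
    rw [mem_Icc] at hmem
    push_neg at hmem
    have h0 : 0 ≤ s0 + (k : ℤ) * (a * b) := by positivity
    have := hmem h0
    symm
    apply chiS_neg ha hb hS
    omega

lemma convC {a b : ℤ} {S : Set ℤ} (ha : 0 < a) (hb : 0 < b) (hab : Int.gcd a b = 1)
    (hS : S = {z : ℤ | ∃ m n : ℕ, z = (m : ℤ) * a + (n : ℤ) * b}) (x : ℤ) :
    ∑ c ∈ Icc 0 x, fF a b c * chiS S (x - c) = if x = 0 then 1 else 0 := by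
  have hab0 : 0 < a * b := by positivity
  set N : ℕ := x.toNat + 1 with hNdef
  have hN : x < (N : ℤ) * (a * b) := by
    have h1 : x < (N : ℤ) := by omega
    nlinarith
  have r0 := reindex ha hb hS (le_refl 0 : (0:ℤ) ≤ 0) hN
  have ra := reindex ha hb hS (le_of_lt ha) hN
  have rb := reindex ha hb hS (le_of_lt hb) hN
  have rab := reindex ha hb hS (by omega : (0:ℤ) ≤ a + b) hN
  have split : ∑ c ∈ Icc 0 x, fF a b c * chiS S (x - c)
      = ∑ c ∈ Icc 0 x, eE a b (c - 0) * chiS S (x - c)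
        - ∑ c ∈ Icc 0 x, eE a b (c - a) * chiS S (x - c)
        - ∑ c ∈ Icc 0 x, eE a b (c - b) * chiS S (x - c)
        + ∑ c ∈ Icc 0 x, eE a b (c - (a + b)) * chiS S (x - c) := by
    have hpt : ∀ c ∈ Icc 0 x, fF a b c * chiS S (x - c)
        = eE a b (c - 0) * chiS S (x - c) - eE a b (c - a) * chiS S (x - c)
          - eE a b (c - b) * chiS S (x - c) + eE a b (c - (a + b)) * chiS S (x - c) := by
      intro c _
      rw [fF]
      have h1 : c - 0 = c := by ring
      have h2 : c - (a + b) = c - a - b := by ring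
      rw [h1, h2]
      ring
    rw [Finset.sum_congr rfl hpt, Finset.sum_add_distrib, Finset.sum_sub_distrib,
      Finset.sum_sub_distrib]
  rw [split, r0, ra, rb, rab]
  rw [← Finset.sum_sub_distrib, ← Finset.sum_sub_distrib, ← Finset.sum_add_distrib]
  have hterm : ∀ k ∈ range N,
      (chiS S (x - 0 - (k : ℤ) * (a * b)) - chiS S (x - a - (k : ℤ) * (a * b))
        - chiS S (x - b - (k : ℤ) * (a * b)) + chiS S (x - (a + b) - (k : ℤ) * (a * b)))
      = (if x = (k : ℤ) * (a * b) then 1 else 0)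
        - (if x = ((k + 1 : ℕ) : ℤ) * (a * b) then 1 else 0) := by
    intro k _
    have hL := keyL ha hb hab hS (x - (k : ℤ) * (a * b))
    have e1 : x - 0 - (k : ℤ) * (a * b) = x - (k : ℤ) * (a * b) := by ring
    have e2 : x - a - (k : ℤ) * (a * b) = x - (k : ℤ) * (a * b) - a := by ring
    have e3 : x - b - (k : ℤ) * (a * b) = x - (k : ℤ) * (a * b) - b := by ring
    have e4 : x - (a + b) - (k : ℤ) * (a * b) = x - (k : ℤ) * (a * b) - a - b := by ring
    rw [e1, e2, e3, e4, hL]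
    congr 1
    · apply if_congr _ rfl rfl
      constructor
      · intro h; linarith
      · intro h; linarith
    · apply if_congr _ rfl rfl
      constructor
      · intro h; push_cast; linarith
      · intro h; push_cast at h; linarith
  rw [Finset.sum_congr rfl hterm]
  have := Finset.sum_range_sub' (fun k : ℕ => if x = (k : ℤ) * (a * b) then (1:ℤ) else 0) N
  rw [this]
  have h0 : ((0 : ℕ) : ℤ) * (a * b) = 0 := by push_cast; ring
  rw [h0]
  have hNne : ¬ x = ((N : ℕ) : ℤ) * (a * b) := by omega
  rw [if_neg hNne, sub_zero]

lemma mem_of_eE {a b : ℤ} {S : Set ℤ} (ha : 0 < a) (hb : 0 < b)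
    (hS : S = {z : ℤ | ∃ m n : ℕ, z = (m : ℤ) * a + (n : ℤ) * b})
    {x : ℤ} (m0 n0 : ℤ) (hm0 : 0 ≤ m0) (hn0 : 0 ≤ n0)
    (h : eE a b (x - (m0 * a + n0 * b)) ≠ 0) : x ∈ S := by
  have hab0 : 0 < a * b := by positivity
  have h' : 0 ≤ x - (m0 * a + n0 * b) ∧ (a * b) ∣ x - (m0 * a + n0 * b) := by
    by_contra hc
    rw [eE, if_neg hc] at h
    exact h rfl
  obtain ⟨k, hk⟩ := h'.2
  have hk0 : 0 ≤ k := by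
    by_contra hc
    push_neg at hc
    have h2 : a * b * k ≤ a * b * (-1) := mul_le_mul_of_nonneg_left (by omega) (le_of_lt hab0)
    have := h'.1
    omega
  rw [memS_iff hS]
  exact ⟨m0 + k * b, n0, by positivity, hn0, by linear_combination hk⟩

lemma fF_vanish {a b : ℤ} {S : Set ℤ} (ha : 0 < a) (hb : 0 < b)
    (hS : S = {z : ℤ | ∃ m n : ℕ, z = (m : ℤ) * a + (n : ℤ) * b})
    {x : ℤ} (hx : x ∉ S) : fF a b x = 0 := by
  have h0 : eE a b x = 0 := by
    by_contra h
    apply hx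
    apply mem_of_eE ha hb hS 0 0 le_rfl le_rfl
    rw [show x - ((0:ℤ) * a + 0 * b) = x by ring]
    exact h
  have hA : eE a b (x - a) = 0 := by
    by_contra h
    apply hx
    apply mem_of_eE ha hb hS 1 0 zero_le_one le_rfl
    rw [show x - ((1:ℤ) * a + 0 * b) = x - a by ring]
    exact h
  have hB : eE a b (x - b) = 0 := by
    by_contra h
    apply hx
    apply mem_of_eE ha hb hS 0 1 le_rfl zero_le_one
    rw [show x - ((0:ℤ) * a + 1 * b) = x - b by ring]
    exact h
  have hAB : eE a b (x - a - b) = 0 := by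
    by_contra h
    apply hx
    apply mem_of_eE ha hb hS 1 1 zero_le_one zero_le_one
    rw [show x - ((1:ℤ) * a + 1 * b) = x - a - b by ring]
    exact h
  rw [fF, h0, hA, hB, hAB]
  ring
lemma fF_zero {a b : ℤ} (ha : 0 < a) (hb : 0 < b) : fF a b 0 = 1 := by
  have hab0 : 0 < a * b := by positivity
  rw [fF, eE, eE, eE, eE]
  rw [if_pos ⟨le_rfl, dvd_zero _⟩, if_neg (fun h => by omega : ¬(0 ≤ 0 - a ∧ a * b ∣ 0 - a)),
    if_neg (fun h => by omega : ¬(0 ≤ 0 - b ∧ a * b ∣ 0 - b)),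
    if_neg (fun h => by omega : ¬(0 ≤ 0 - a - b ∧ a * b ∣ 0 - a - b))]
  ring

lemma fF_neg {a b : ℤ} (ha : 0 < a) (hb : 0 < b) {x : ℤ} (hx : x < 0) : fF a b x = 0 := by
  rw [fF, eE, eE, eE, eE]
  rw [if_neg (fun h => by omega : ¬(0 ≤ x ∧ a * b ∣ x)),
    if_neg (fun h => by omega : ¬(0 ≤ x - a ∧ a * b ∣ x - a)),
    if_neg (fun h => by omega : ¬(0 ≤ x - b ∧ a * b ∣ x - b)),
    if_neg (fun h => by omega : ¬(0 ≤ x - a - b ∧ a * b ∣ x - a - b))]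
  ring


lemma mobius2_eq_fF {a b : ℤ} {S : Set ℤ} (ha : 0 < a) (hb : 0 < b)
    (hab : Int.gcd a b = 1)
    (hS : S = {z : ℤ | ∃ m n : ℕ, z = (m : ℤ) * a + (n : ℤ) * b})
    (x : ℤ) : mobius2 S 0 x = fF a b x := by
  have zeroS : (0 : ℤ) ∈ S := by
    rw [memS_iff hS]; exact ⟨0, 0, le_rfl, le_rfl, by ring⟩
  suffices H : ∀ n : ℕ, ∀ x : ℤ, x.toNat ≤ n → mobius2 S 0 x = fF a b x from
    H x.toNat x le_rfl
  have base : ∀ x : ℤ, x ≤ 0 → mobius2 S 0 x = fF a b x := by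
    intro x hx
    rcases eq_or_lt_of_le hx with h0 | h0
    · subst h0
      rw [mobius2, if_pos rfl, fF_zero ha hb]
    · rw [mobius2, if_neg (by omega : ¬(0 : ℤ) = x), if_neg, fF_neg ha hb h0]
      intro hmem
      have := S_nonneg ha hb hS hmem
      omega
  intro n
  induction n with
  | zero =>
    intro x hx
    exact base x (by omega)
  | succ n ih =>
    intro x hx
    rcases le_or_gt x 0 with h0 | h0
    · exact base x h0
    rw [mobius2, if_neg (by omega : ¬(0 : ℤ) = x)]
    by_cases hxS : x - 0 ∈ S
    · rw [if_pos hxS]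
      rw [sub_zero] at hxS
      rw [Finset.sum_attach (Finset.Ico 0 x)
        (fun y => if (y - 0 ∈ S ∧ x - y ∈ S) then mobius2 S 0 y else 0)]
      have hstep : ∀ c ∈ Finset.Ico 0 x,
          (if (c - 0 ∈ S ∧ x - c ∈ S) then mobius2 S 0 c else 0)
            = fF a b c * chiS S (x - c) := by
        intro c hc
        rw [Finset.mem_Ico] at hc
        rw [sub_zero]
        by_cases h2 : x - c ∈ S
        · by_cases h1 : c ∈ S
          · rw [if_pos ⟨h1, h2⟩, chiS, if_pos h2, mul_one]
            exact ih c (by omega)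
          · rw [if_neg (by tauto), fF_vanish ha hb hS h1, zero_mul]
        · rw [if_neg (by tauto), chiS, if_neg h2, mul_zero]
      rw [Finset.sum_congr rfl hstep]
      have hC := convC ha hb hab hS x
      have hicc : Finset.Icc 0 x = insert x (Finset.Ico 0 x) :=
        (Finset.Ico_insert_right (by omega)).symm
      rw [hicc, Finset.sum_insert Finset.right_notMem_Ico, if_neg (by omega : ¬x = 0)] at hC
      rw [sub_self, chiS, if_pos zeroS, mul_one] at hC
      linarith
    · rw [if_neg hxS]
      rw [sub_zero] at hxS
      exact (fF_vanish ha hb hS hxS).symm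

lemma eE_diff {a b : ℤ} (ha : 0 < a) (hb : 0 < b) (y : ℤ) :
    eE a b y - eE a b (y - a * b) = if y = 0 then 1 else 0 := by
  have hab0 : 0 < a * b := by positivity
  by_cases hy : y = 0
  · subst hy
    rw [eE, eE, if_pos ⟨le_rfl, dvd_zero _⟩,
      if_neg (fun h => by omega : ¬(0 ≤ 0 - a * b ∧ a * b ∣ 0 - a * b)), if_pos rfl]
    norm_num
  · rw [if_neg hy]
    by_cases h1 : 0 ≤ y ∧ (a * b) ∣ y
    · have hyab : a * b ≤ y := Int.le_of_dvd (by omega) h1.2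
      have h2 : 0 ≤ y - a * b ∧ (a * b) ∣ y - a * b :=
        ⟨by omega, (Dvd.dvd.sub h1.2 dvd_rfl : (a * b) ∣ y - a * b)⟩
      rw [eE, eE, if_pos h1, if_pos h2]
      ring
    · have h2 : ¬(0 ≤ y - a * b ∧ (a * b) ∣ y - a * b) := by
        rintro ⟨hge, hdvd⟩
        apply h1
        constructor
        · omega
        · have : (a * b) ∣ (y - a * b) + a * b := Dvd.dvd.add hdvd dvd_rfl
          simpa using this
      rw [eE, eE, if_neg h1, if_neg h2]
      ring

lemma fF_periodic {a b : ℤ} (ha : 0 < a) (hb : 0 < b) {x : ℤ}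
    (h0 : x ≠ 0) (hA : x ≠ a) (hB : x ≠ b) (hAB : x ≠ a + b) :
    fF a b x = fF a b (x - a * b) := by
  have d0 := eE_diff ha hb x
  have da := eE_diff ha hb (x - a)
  have db := eE_diff ha hb (x - b)
  have dab := eE_diff ha hb (x - a - b)
  rw [if_neg h0] at d0
  rw [if_neg (by omega : ¬x - a = 0)] at da
  rw [if_neg (by omega : ¬x - b = 0)] at db
  rw [if_neg (by omega : ¬x - a - b = 0)] at dab
  have e1 : x - a * b - a = x - a - a * b := by ring
  have e2 : x - a * b - b = x - b - a * b := by ring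
  have e3 : x - a * b - a - b = x - a - b - a * b := by ring
  rw [fF, fF, e3, e1, e2]
  linarith

theorem mobius_periodic_two_generators (a b : ℤ) (ha : 0 < a) (hb : 0 < b)
    (hab : Int.gcd a b = 1)
    (S : Set ℤ)
    (hS : S = {z : ℤ | ∃ m n : ℕ, z = (m : ℤ) * a + (n : ℤ) * b})
    (x : ℤ) (hx : x ∉ ({0, a, b, a + b} : Set ℤ)) :
    mobiusRed S x = mobiusRed S (x - a * b) := by
  simp only [Set.mem_insert_iff, Set.mem_singleton_iff, not_or] at hx
  obtain ⟨h0, hA, hB, hAB⟩ := hx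
  rw [mobiusRed, mobiusRed, mobius2_eq_fF ha hb hab hS, mobius2_eq_fF ha hb hab hS]
  exact fF_periodic ha hb h0 hA hB hAB
end

section
/- Let a and b be relatively prime positive integers and let S = ⟨a, b⟩. Then for every integer x ∉ {0, a}, one has μ_S(x) = −∑_{m=1}^{a−1} μ_S(x − m b). -/
attribute [local instance] Classical.propDecidable

lemma mobiusRed_zero (S : Set ℤ) : mobiusRed S 0 = 1 := by
  rw [mobiusRed, mobius2]; simp

lemma mobiusRed_not_mem (S : Set ℤ) {x : ℤ} (hx0 : x ≠ 0) (hxS : x ∉ S) : mobiusRed S x = 0 := by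
  rw [mobiusRed, mobius2]
  rw [if_neg (by omega : ¬ (0:ℤ) = x), if_neg (by simpa using hxS)]

lemma mobiusRed_rec (S : Set ℤ) {x : ℤ} (hx0 : x ≠ 0) (hxS : x ∈ S) :
    mobiusRed S x = - ∑ c ∈ Finset.Ico (0:ℤ) x,
      (if (c ∈ S ∧ x - c ∈ S) then mobiusRed S c else 0) := by
  rw [mobiusRed, mobius2]
  rw [if_neg (by omega : ¬ (0:ℤ) = x), if_pos (by simpa using hxS)]
  rw [neg_inj]
  rw [← Finset.sum_attach (Finset.Ico (0:ℤ) x) (fun c => if (c ∈ S ∧ x - c ∈ S) then mobiusRed S c else 0)]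
  apply Finset.sum_congr rfl
  intro c _
  simp [sub_zero, mobiusRed]

lemma sum_Ico_int_eq_range (n : ℕ) (f : ℤ → ℤ) :
    ∑ c ∈ Finset.Ico (0:ℤ) (n:ℤ), f c = ∑ p ∈ Finset.range n, f (p : ℤ) := by
  have hset : Finset.Ico (0:ℤ) (n:ℤ) = (Finset.range n).map ⟨Nat.cast, Nat.cast_injective⟩ := by
    ext c
    simp only [Finset.mem_Ico, Finset.mem_map, Finset.mem_range, Function.Embedding.coeFn_mk]
    constructor
    · intro hc; exact ⟨c.toNat, by omega, by omega⟩
    · rintro ⟨p, hp, rfl⟩; omega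
  rw [hset, Finset.sum_map]
  rfl

noncomputable def repsF (A B n : ℕ) : Finset (ℕ×ℕ) :=
  (Finset.HasAntidiagonal.antidiagonal n).filter (fun pq => A ∣ pq.1 ∧ B ∣ pq.2)

lemma mem_repsF (A B m : ℕ) (pq : ℕ × ℕ) :
    pq ∈ repsF A B m ↔ (pq.1 + pq.2 = m ∧ A ∣ pq.1 ∧ B ∣ pq.2) := by
  simp [repsF, Finset.mem_filter, Finset.HasAntidiagonal.mem_antidiagonal, and_assoc]

lemma reps_unique (A B : ℕ) (hAB : Nat.Coprime A B) {p q p' q' : ℕ}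
    (he : p + q = p' + q')
    (h1 : A ∣ p) (h2 : B ∣ q) (h1' : A ∣ p') (h2' : B ∣ q')
    (hpb : p < A*B) (hpb' : p' < A*B) : p = p' := by
  have hco : IsCoprime (A:ℤ) (B:ℤ) := by exact_mod_cast Nat.isCoprime_iff_coprime.mpr hAB
  have hdA : (A:ℤ) ∣ ((p:ℤ) - p') :=
    dvd_sub (Int.natCast_dvd_natCast.mpr h1) (Int.natCast_dvd_natCast.mpr h1')
  have hdB : (B:ℤ) ∣ ((p:ℤ) - p') := by
    have heq : (p:ℤ) - p' = (q':ℤ) - q := by push_cast; omega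
    rw [heq]
    exact dvd_sub (Int.natCast_dvd_natCast.mpr h2') (Int.natCast_dvd_natCast.mpr h2)
  have hdvd : ((A:ℤ) * B) ∣ ((p:ℤ) - p') := hco.mul_dvd hdA hdB
  have h0 : (p:ℤ) - p' = 0 := by
    apply Int.eq_zero_of_abs_lt_dvd hdvd
    rw [abs_lt]
    push_cast
    omega
  omega

lemma card_reps (A B : ℕ) (hA : 0 < A) (hB : 0 < B) (hAB : Nat.Coprime A B) (n : ℕ) :
    (repsF A B n).card
      = (if A*B ≤ n then (repsF A B (n - A*B)).card else 0)
        + (if ∃ u v : ℕ, n = u*A + v*B then 1 else 0) := by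
  have hsplit : ((repsF A B n).filter (fun pq => A*B ≤ pq.1)).card
      + ((repsF A B n).filter (fun pq => ¬ A*B ≤ pq.1)).card = (repsF A B n).card :=
    Finset.card_filter_add_card_filter_not _
  have h2 : ((repsF A B n).filter (fun pq => A*B ≤ pq.1)).card
      = if A*B ≤ n then (repsF A B (n - A*B)).card else 0 := by
    split_ifs with h
    · refine Finset.card_bij' (fun pq _ => (pq.1 - A*B, pq.2)) (fun pq _ => (pq.1 + A*B, pq.2)) ?hi2 ?hj2 ?li2 ?ri2
      case hi2 =>
        intro pq hpq
        rw [Finset.mem_filter, mem_repsF] at hpq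
        rw [mem_repsF]
        exact ⟨by omega, Nat.dvd_sub hpq.1.2.1 ⟨B, rfl⟩, hpq.1.2.2⟩
      case hj2 =>
        intro pq hpq
        rw [mem_repsF] at hpq
        rw [Finset.mem_filter, mem_repsF]
        exact ⟨⟨by omega, dvd_add hpq.2.1 ⟨B, rfl⟩, hpq.2.2⟩, by simp⟩
      case li2 =>
        intro pq hpq
        rw [Finset.mem_filter] at hpq
        have hge := hpq.2
        rw [Prod.ext_iff]
        exact ⟨by simp; omega, rfl⟩
      case ri2 =>
        intro pq _
        rw [Prod.ext_iff]
        exact ⟨by simp, rfl⟩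
    · rw [Finset.card_eq_zero, Finset.eq_empty_iff_forall_notMem]
      intro pq hpq
      rw [Finset.mem_filter, mem_repsF] at hpq
      omega
  have h1 : ((repsF A B n).filter (fun pq => ¬ A*B ≤ pq.1)).card
      = if ∃ u v : ℕ, n = u*A + v*B then 1 else 0 := by
    split_ifs with h
    · obtain ⟨u, v, huv⟩ := h
      set u' := u % B with hu'
      set k := u / B with hk
      have hmd : u' + B * k = u := Nat.mod_add_div u B
      have hq : n = u'*A + (B*(k*A) + v*B) := by rw [huv, ← hmd]; ring
      have hu'B : u' < B := Nat.mod_lt _ hB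
      have hlt : u'*A < A*B := by
        calc u'*A < B*A := (Nat.mul_lt_mul_right hA).mpr hu'B
          _ = A*B := Nat.mul_comm B A
      rw [Finset.card_eq_one]
      refine ⟨(u'*A, B*(k*A)+v*B), ?_⟩
      rw [Finset.eq_singleton_iff_unique_mem]
      constructor
      · rw [Finset.mem_filter, mem_repsF]
        exact ⟨⟨hq.symm, ⟨u', Nat.mul_comm u' A⟩, ⟨k*A+v, by ring⟩⟩, by simp; omega⟩
      · rintro ⟨p, q⟩ hpq
        rw [Finset.mem_filter, mem_repsF] at hpq
        obtain ⟨⟨he, hdA, hdB⟩, hlt'⟩ := hpq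
        have hp : p = u'*A :=
          reps_unique A B hAB (he.trans hq)
            hdA hdB ⟨u', Nat.mul_comm u' A⟩ ⟨k*A+v, by ring⟩ (by simp at hlt'; omega) hlt
        rw [Prod.ext_iff]
        exact ⟨hp, by omega⟩
    · rw [Finset.card_eq_zero, Finset.eq_empty_iff_forall_notMem]
      rintro ⟨p, q⟩ hpq
      rw [Finset.mem_filter, mem_repsF] at hpq
      obtain ⟨⟨he, ⟨u, hu⟩, ⟨v, hv⟩⟩, _⟩ := hpq
      exact h ⟨u, v, by rw [← he, hu, hv]; ring⟩
  omega

noncomputable def geoDvd (d : ℕ) : PowerSeries ℤ :=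
  PowerSeries.mk (fun n => if d ∣ n then 1 else 0)

lemma geoDvd_mul (d : ℕ) (hd : 0 < d) :
    (1 - (PowerSeries.X : PowerSeries ℤ)^d) * geoDvd d = 1 := by
  have hrw : (1 - (PowerSeries.X : PowerSeries ℤ)^d) * geoDvd d
      = geoDvd d - geoDvd d * PowerSeries.X^d := by ring
  ext n
  rw [hrw, map_sub, PowerSeries.coeff_mul_X_pow', PowerSeries.coeff_one]
  simp only [geoDvd, PowerSeries.coeff_mk]
  by_cases hdn : d ≤ n
  · have hiff : d ∣ n ↔ d ∣ (n - d) := by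
      constructor
      · intro h; exact Nat.dvd_sub h dvd_rfl
      · intro h
        have : n = (n - d) + d := by omega
        rw [this]; exact dvd_add h dvd_rfl
    rw [if_pos hdn, if_neg (by omega : ¬ n = 0)]
    by_cases h : d ∣ n
    · rw [if_pos h, if_pos (hiff.mp h)]; ring
    · rw [if_neg h, if_neg (fun hc => h (hiff.mpr hc))]; ring
  · rw [if_neg hdn]
    rcases Nat.eq_zero_or_pos n with rfl | hn
    · simp
    · rw [if_neg (by omega : ¬ n = 0), if_neg (fun h => by
        have := Nat.le_of_dvd hn h; omega)]
      ring

lemma key (A B : ℕ) (hA : 0 < A) (hB : 0 < B) (hAB : Nat.Coprime A B)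
    (S : Set ℤ) (hSiff : ∀ z : ℤ, z ∈ S ↔ ∃ u v : ℕ, z = (u:ℤ)*A + (v:ℤ)*B) (n : ℕ) :
    ∑ m ∈ Finset.range A, mobiusRed S ((n:ℤ) - (m:ℤ)*B)
      = (if n = 0 then 1 else 0) - (if n = A then 1 else 0) := by
  have h0S : (0:ℤ) ∈ S := by rw [hSiff]; exact ⟨0, 0, by simp⟩
  have hpos : ∀ z ∈ S, (0:ℤ) ≤ z := by
    intro z hz
    rw [hSiff] at hz
    obtain ⟨u, v, rfl⟩ := hz
    positivity
  have hadd : ∀ y z : ℤ, y ∈ S → z ∈ S → y + z ∈ S := by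
    intro y z hy hz
    rw [hSiff] at hy hz ⊢
    obtain ⟨u, v, rfl⟩ := hy
    obtain ⟨u', v', rfl⟩ := hz
    exact ⟨u + u', v + v', by push_cast; ring⟩
  have hSnat : ∀ m : ℕ, ((m:ℤ) ∈ S) ↔ (∃ u v : ℕ, m = u*A + v*B) := by
    intro m
    rw [hSiff]
    constructor
    · rintro ⟨u, v, h⟩
      exact ⟨u, v, by exact_mod_cast h⟩
    · rintro ⟨u, v, h⟩
      exact ⟨u, v, by exact_mod_cast h⟩
  have hμnot : ∀ z : ℤ, z ∉ S → mobiusRed S z = 0 := by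
    intro z hz
    have : z ≠ 0 := fun h => hz (h ▸ h0S)
    exact mobiusRed_not_mem S this hz
  set M : PowerSeries ℤ := PowerSeries.mk (fun m => mobiusRed S m) with hM
  set Z : PowerSeries ℤ := PowerSeries.mk (fun m => if (m:ℤ) ∈ S then 1 else 0) with hZdef
  -- Step A : M * Z = 1
  have hMZ : M * Z = 1 := by
    ext m
    rw [PowerSeries.coeff_mul, PowerSeries.coeff_one]
    rcases Nat.eq_zero_or_pos m with rfl | hm
    · simp [hM, hZdef, mobiusRed_zero, h0S]
    · rw [if_neg (by omega)]
      rw [Finset.Nat.sum_antidiagonal_eq_sum_range_succ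
        (fun p q => (PowerSeries.coeff (R := ℤ) p) M * (PowerSeries.coeff (R := ℤ) q) Z)]
      simp only [hM, hZdef, PowerSeries.coeff_mk]
      by_cases hmS : ((m:ℤ)) ∈ S
      · rw [Finset.sum_range_succ]
        have hrec := mobiusRed_rec S (x := (m:ℤ)) (by exact_mod_cast hm.ne') hmS
        rw [sum_Ico_int_eq_range m
          (fun c => if (c ∈ S ∧ (m:ℤ) - c ∈ S) then mobiusRed S c else 0)] at hrec
        have hterm : ∀ p ∈ Finset.range m,
            mobiusRed S (p:ℤ) * (if ((m - p : ℕ):ℤ) ∈ S then (1:ℤ) else 0)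
              = (if ((p:ℤ) ∈ S ∧ (m:ℤ) - (p:ℤ) ∈ S) then mobiusRed S (p:ℤ) else 0) := by
          intro p hp
          rw [Finset.mem_range] at hp
          have hcast : ((m - p : ℕ):ℤ) = (m:ℤ) - (p:ℤ) := by push_cast; omega
          rw [hcast]
          by_cases h1 : ((p:ℤ)) ∈ S
          · by_cases h2 : (m:ℤ) - (p:ℤ) ∈ S
            · simp [h1, h2]
            · simp [h1, h2]
          · simp [hμnot _ h1, h1]
        rw [Finset.sum_congr rfl hterm]
        rw [Nat.sub_self, Nat.cast_zero, if_pos h0S, mul_one]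
        linarith [hrec]
      · apply Finset.sum_eq_zero
        intro p hp
        rw [Finset.mem_range] at hp
        by_cases h1 : ((p:ℤ)) ∈ S
        · by_cases h2 : ((m - p : ℕ):ℤ) ∈ S
          · exfalso
            apply hmS
            have := hadd _ _ h1 h2
            have hc : (p:ℤ) + ((m - p : ℕ):ℤ) = (m:ℤ) := by push_cast; omega
            rwa [hc] at this
          · simp [h2]
        · simp [hμnot _ h1]
  -- coefficients of geoDvd A * geoDvd B count representations
  have hcoeffGG : ∀ m : ℕ, (PowerSeries.coeff (R := ℤ) m) (geoDvd A * geoDvd B)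
      = ((repsF A B m).card : ℤ) := by
    intro m
    rw [PowerSeries.coeff_mul, repsF, Finset.card_filter]
    push_cast
    apply Finset.sum_congr rfl
    intro pq _
    simp only [geoDvd, PowerSeries.coeff_mk]
    by_cases h1 : A ∣ pq.1
    · by_cases h2 : B ∣ pq.2
      · simp [h1, h2]
      · simp [h1, h2]
    · simp [h1]
  -- Step B : Z = geoDvd A * geoDvd B * (1 - X^(A*B))
  have hZ : Z = (geoDvd A * geoDvd B) * (1 - PowerSeries.X^(A*B)) := by
    have hrw : (geoDvd A * geoDvd B) * (1 - PowerSeries.X^(A*B))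
        = geoDvd A * geoDvd B - (geoDvd A * geoDvd B) * PowerSeries.X^(A*B) := by ring
    ext m
    rw [hrw, map_sub, PowerSeries.coeff_mul_X_pow', hcoeffGG m, hcoeffGG (m - A*B)]
    simp only [hZdef, PowerSeries.coeff_mk]
    rw [hSnat m] at *
    have hcr := card_reps A B hA hB hAB m
    by_cases hle : A*B ≤ m
    · rw [if_pos hle] at hcr ⊢
      by_cases hex : ∃ u v : ℕ, m = u*A + v*B
      · rw [if_pos hex] at hcr ⊢
        rw [hcr]; push_cast; try ring
      · rw [if_neg hex] at hcr ⊢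
        rw [hcr]; push_cast; try ring
    · rw [if_neg hle] at hcr ⊢
      by_cases hex : ∃ u v : ℕ, m = u*A + v*B
      · rw [if_pos hex] at hcr ⊢
        rw [hcr]; push_cast; try ring
      · rw [if_neg hex] at hcr ⊢
        rw [hcr]; push_cast; try ring
  -- Step C : M * H = 1 - X^A
  set H : PowerSeries ℤ := ∑ i ∈ Finset.range A, (PowerSeries.X^B)^i with hH
  have hHmul : H * (1 - PowerSeries.X^B) = 1 - PowerSeries.X^(A*B) := by
    have hg := geom_sum_mul (PowerSeries.X^B : PowerSeries ℤ) A
    have h2 : H * (1 - PowerSeries.X^B)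
        = -((∑ i ∈ Finset.range A, (PowerSeries.X^B : PowerSeries ℤ)^i) * (PowerSeries.X^B - 1)) := by
      rw [hH]; ring
    rw [h2, hg, ← pow_mul, Nat.mul_comm B A]
    ring
  have hXBne : (1 : PowerSeries ℤ) - PowerSeries.X^B ≠ 0 := by
    intro h
    have := congrArg (PowerSeries.coeff (R := ℤ) B) h
    rw [map_sub, PowerSeries.coeff_one, PowerSeries.coeff_X_pow] at this
    rw [if_neg (by omega : ¬ B = 0), if_pos rfl] at this
    simp at this
  have hZH : Z * (1 - PowerSeries.X^A) = H := by
    apply mul_right_cancel₀ hXBne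
    rw [hHmul, hZ]
    have hgA := geoDvd_mul A hA
    have hgB := geoDvd_mul B hB
    calc geoDvd A * geoDvd B * (1 - PowerSeries.X^(A*B)) * (1 - PowerSeries.X^A) * (1 - PowerSeries.X^B)
        = ((1 - PowerSeries.X^A) * geoDvd A) * ((1 - PowerSeries.X^B) * geoDvd B) * (1 - PowerSeries.X^(A*B)) := by ring
      _ = 1 - PowerSeries.X^(A*B) := by rw [hgA, hgB]; ring
  have hMH : M * H = 1 - PowerSeries.X^A := by
    rw [← hZH, ← mul_assoc, hMZ, one_mul]
  -- coefficient extraction at n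
  have hMHsum : M * H = ∑ i ∈ Finset.range A, M * PowerSeries.X^(B*i) := by
    rw [hH, Finset.mul_sum]
    apply Finset.sum_congr rfl
    intro i _
    rw [← pow_mul]
  have hcoeff := congrArg (PowerSeries.coeff (R := ℤ) n) hMH
  rw [hMHsum, map_sum, map_sub, PowerSeries.coeff_one, PowerSeries.coeff_X_pow] at hcoeff
  have hterm : ∀ i ∈ Finset.range A,
      (PowerSeries.coeff (R := ℤ) n) (M * PowerSeries.X^(B*i)) = mobiusRed S ((n:ℤ) - (i:ℤ)*B) := by
    intro i _
    rw [PowerSeries.coeff_mul_X_pow']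
    by_cases h : B*i ≤ n
    · rw [if_pos h]
      simp only [hM, PowerSeries.coeff_mk]
      congr 1
      rw [Nat.cast_sub h]
      push_cast
      ring
    · rw [if_neg h]
      have hlt' : (n:ℤ) < (i:ℤ)*(B:ℤ) := by
        have h2 : n < B*i := by omega
        calc (n:ℤ) < ((B*i : ℕ):ℤ) := by exact_mod_cast h2
          _ = (i:ℤ)*(B:ℤ) := by push_cast; ring
      rw [hμnot _ (fun hc => absurd (hpos _ hc) (by linarith))]
  rw [Finset.sum_congr rfl hterm] at hcoeff
  rw [hcoeff]

theorem mobius_sum_formula_two_generators (a b : ℤ) (ha : 0 < a) (hb : 0 < b)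
    (hab : Int.gcd a b = 1)
    (S : Set ℤ)
    (hS : S = {z : ℤ | ∃ m n : ℕ, z = (m : ℤ) * a + (n : ℤ) * b})
    (x : ℤ) (hx : x ∉ ({0, a} : Set ℤ)) :
    mobiusRed S x = -∑ m ∈ Finset.Icc (1 : ℤ) (a - 1), mobiusRed S (x - m * b) := by
  simp only [Set.mem_insert_iff, Set.mem_singleton_iff, not_or] at hx
  obtain ⟨hx0, hxa⟩ := hx
  set A := a.toNat with hA
  set B := b.toNat with hB
  have hAa : (A:ℤ) = a := Int.toNat_of_nonneg ha.le
  have hBb : (B:ℤ) = b := Int.toNat_of_nonneg hb.le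
  have hApos : 0 < A := by omega
  have hBpos : 0 < B := by omega
  have hABcop : Nat.Coprime A B := by
    have h1 : a.natAbs = A := by omega
    have h2 : b.natAbs = B := by omega
    unfold Nat.Coprime
    rw [← h1, ← h2]
    exact hab
  have hSiff : ∀ z : ℤ, z ∈ S ↔ ∃ u v : ℕ, z = (u:ℤ)*A + (v:ℤ)*B := by
    intro z
    rw [hS]
    simp only [Set.mem_setOf_eq, hAa, hBb]
  have hpos : ∀ z ∈ S, (0:ℤ) ≤ z := by
    intro z hz
    rw [hSiff] at hz
    obtain ⟨u, v, rfl⟩ := hz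
    positivity
  have h0S : (0:ℤ) ∈ S := by rw [hSiff]; exact ⟨0, 0, by simp⟩
  have hμnot : ∀ z : ℤ, z < 0 → mobiusRed S z = 0 := by
    intro z hz
    exact mobiusRed_not_mem S (by omega) (fun hc => by have := hpos _ hc; omega)
  rcases lt_or_ge x 0 with hxneg | hxnn
  · rw [hμnot _ hxneg]
    rw [Finset.sum_eq_zero, neg_zero]
    intro m hm
    rw [Finset.mem_Icc] at hm
    apply hμnot
    have hmb : 0 < m * b := mul_pos (by omega) hb
    omega
  · set n := x.toNat with hn
    have hxn : (n:ℤ) = x := Int.toNat_of_nonneg hxnn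
    have hkey := key A B hApos hBpos hABcop S hSiff n
    rw [if_neg (by omega : ¬ n = 0), if_neg (by omega : ¬ n = A)] at hkey
    rw [Finset.range_eq_Ico, Finset.sum_eq_sum_Ico_succ_bot hApos] at hkey
    simp only [Nat.cast_zero, zero_mul, sub_zero, zero_add, hxn] at hkey
    have hset : Finset.Icc (1:ℤ) (a-1) = (Finset.Ico 1 A).map ⟨Nat.cast, Nat.cast_injective⟩ := by
      ext c
      simp only [Finset.mem_Icc, Finset.mem_map, Finset.mem_Ico, Function.Embedding.coeFn_mk]
      constructor
      · intro hc; exact ⟨c.toNat, by omega, by omega⟩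
      · rintro ⟨p, hp, rfl⟩; omega
    have hre : ∑ m ∈ Finset.Icc (1:ℤ) (a-1), mobiusRed S (x - m * b)
        = ∑ m ∈ Finset.Ico 1 A, mobiusRed S (x - (m:ℤ)*(B:ℤ)) := by
      rw [hset, Finset.sum_map]
      apply Finset.sum_congr rfl
      intro m _
      simp only [Function.Embedding.coeFn_mk]
      rw [hBb]
    rw [hre]
    linarith [hkey]
end

section
/- (Existence of the canonical representation) Let a, d, k be positive integers with gcd(a, d) = 1 and 2 ≤ k ≤ a − 1, and let S = ⟨a, a+d, …, a+kd⟩. Then for every x ∈ S there exist x_0 ∈ ℕ, i ∈ {1, …, k−1}, x_i ∈ {0, 1} and x_k ∈ {0, 1, …, ⌊a/k⌋} with i·x_i + k·x_k < a such that x = x_0·a + x_i·(a + i d) + x_k·(a + k d). -/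
theorem arithmetic_semigroup_representation_existence
    (a d k : ℕ) (ha : 0 < a) (hd : 0 < d) (hk2 : 2 ≤ k) (hka : k ≤ a - 1)
    (hgcd : Nat.gcd a d = 1)
    (S : Set ℕ)
    (hS : S = {x : ℕ | ∃ c : Fin (k + 1) → ℕ, x = ∑ i, c i * (a + (i : ℕ) * d)})
    (x : ℕ) (hx : x ∈ S) :
    ∃ (x0 i xi xk : ℕ), 1 ≤ i ∧ i ≤ k - 1 ∧ xi ≤ 1 ∧ xk ≤ a / k ∧
      i * xi + k * xk < a ∧
      x = x0 * a + xi * (a + i * d) + xk * (a + k * d) := by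
  subst hS
  obtain ⟨c, hc⟩ := hx
  have key : ∃ n m : ℕ, x = n * a + m * d ∧ m ≤ k * n := by
    refine ⟨∑ i, c i, ∑ i : Fin (k+1), (i : ℕ) * c i, ?_, ?_⟩
    · rw [hc, Finset.sum_mul, Finset.sum_mul, ← Finset.sum_add_distrib]
      congr 1; funext i; ring
    · rw [Finset.mul_sum]
      refine Finset.sum_le_sum fun i _ => ?_
      exact Nat.mul_le_mul_right _ (Nat.lt_succ_iff.mp i.isLt)
  have descent : ∀ m n : ℕ, x = n * a + m * d → m ≤ k * n →
      ∃ n' m', x = n' * a + m' * d ∧ m' ≤ k * n' ∧ m' < a := by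
    intro m
    induction m using Nat.strong_induction_on with
    | _ m ih =>
      intro n hxe hmn
      by_cases hma : m < a
      · exact ⟨n, m, hxe, hmn, hma⟩
      · push_neg at hma
        refine ih (m - a) (by omega) (n + d) ?_ ?_
        · have h2 : (m - a) + a = m := Nat.sub_add_cancel hma
          calc x = n * a + m * d := hxe
            _ = n * a + ((m - a) + a) * d := by rw [h2]
            _ = (n + d) * a + (m - a) * d := by ring
        · have := Nat.mul_le_mul_left k (Nat.le_add_right n d)
          omega
  obtain ⟨n, m, hxe, hmn⟩ := key
  obtain ⟨n, m, hxe, hmn, hma⟩ := descent m n hxe hmn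
  have hk0 : 0 < k := by omega
  have hdm : k * (m / k) + m % k = m := Nat.div_add_mod m k
  have hrk : m % k < k := Nat.mod_lt _ hk0
  set q := m / k with hq
  set r := m % k with hr
  have hqa : q ≤ a / k := by
    rw [Nat.le_div_iff_mul_le hk0, mul_comm]
    omega
  by_cases hr0 : r = 0
  · -- m = k*q, use i = 1, xi = 0, xk = q
    have hqn : q ≤ n := by
      have : k * q ≤ k * n := by omega
      exact Nat.le_of_mul_le_mul_left this hk0
    obtain ⟨n', rfl⟩ : ∃ n', n = q + n' := ⟨n - q, by omega⟩
    refine ⟨n', 1, 0, q, le_refl 1, by omega, by omega, hqa, by omega, ?_⟩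
    have hm : m = k * q := by omega
    rw [hxe, hm]; ring
  · -- r ≥ 1, use i = r, xi = 1, xk = q
    have hqn : q + 1 ≤ n := by
      have h1 : k * q < k * n := by omega
      have := Nat.lt_of_mul_lt_mul_left h1
      omega
    obtain ⟨n', rfl⟩ : ∃ n', n = q + 1 + n' := ⟨n - q - 1, by omega⟩
    refine ⟨n', r, 1, q, by omega, by omega, le_refl 1, hqa, by omega, ?_⟩
    have hm : m = k * q + r := by omega
    rw [hxe, hm]; ring
end

section
/- (Uniqueness of the canonical representation) Let a, d, k be positive integers with gcd(a, d) = 1 and 2 ≤ k ≤ a − 1. Suppose x_0·a + x_i·(a + i d) + x_k·(a + k d) = y_0·a + y_j·(a + j d) + y_k·(a + k d), where x_0, y_0 ∈ ℕ, i, j ∈ {1, …, k−1}, x_i, y_j ∈ {0, 1}, x_k, y_k ∈ ℕ, i·x_i + k·x_k < a and j·y_j + k·y_k < a. Then x_0 = y_0, x_i = y_j, x_k = y_k, and if x_i = y_j = 1 then i = j. -/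
theorem arithmetic_semigroup_representation_uniqueness
    (a d k : ℕ) (ha : 0 < a) (hd : 0 < d) (hk2 : 2 ≤ k) (hka : k ≤ a - 1)
    (hgcd : Nat.gcd a d = 1)
    (x0 y0 i j xi yj xk yk : ℕ)
    (hi : 1 ≤ i) (hik : i ≤ k - 1) (hj : 1 ≤ j) (hjk : j ≤ k - 1)
    (hxi : xi ≤ 1) (hyj : yj ≤ 1)
    (hxbound : i * xi + k * xk < a) (hybound : j * yj + k * yk < a)
    (heq : x0 * a + xi * (a + i * d) + xk * (a + k * d) =
           y0 * a + yj * (a + j * d) + yk * (a + k * d)) :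
    x0 = y0 ∧ xi = yj ∧ xk = yk ∧ (xi = 1 ∧ yj = 1 → i = j) := by
  have key : (x0 + xi + xk) * a + (i * xi + k * xk) * d =
      (y0 + yj + yk) * a + (j * yj + k * yk) * d := by
    have h1 : (x0 + xi + xk) * a + (i * xi + k * xk) * d =
        x0 * a + xi * (a + i * d) + xk * (a + k * d) := by ring
    rw [h1, heq]; ring
  -- cancel mod a
  have hmod : (i * xi + k * xk) * d ≡ (j * yj + k * yk) * d [MOD a] := by
    calc (i * xi + k * xk) * d % a
        = ((i * xi + k * xk) * d + (x0 + xi + xk) * a) % a :=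
          (Nat.add_mul_mod_self_right _ _ _).symm
      _ = ((j * yj + k * yk) * d + (y0 + yj + yk) * a) % a := by
          rw [add_comm, key, add_comm]
      _ = (j * yj + k * yk) * d % a := Nat.add_mul_mod_self_right _ _ _
  have hAB : i * xi + k * xk = j * yj + k * yk := by
    have h2 := hmod.cancel_right_of_coprime hgcd
    have : (i * xi + k * xk) % a = (j * yj + k * yk) % a := h2
    rwa [Nat.mod_eq_of_lt hxbound, Nat.mod_eq_of_lt hybound] at this
  have hsum : x0 + xi + xk = y0 + yj + yk := by
    rw [hAB] at key
    have : (x0 + xi + xk) * a = (y0 + yj + yk) * a := by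
      exact Nat.add_right_cancel key
    exact Nat.eq_of_mul_eq_mul_right ha this
  have e1 : i * xi < k := by
    have := Nat.mul_le_mul_left i hxi
    simp at this; omega
  have e2 : j * yj < k := by
    have := Nat.mul_le_mul_left j hyj
    simp at this; omega
  have h5 : i * xi = j * yj := by
    calc i * xi = (i * xi) % k := (Nat.mod_eq_of_lt e1).symm
      _ = (i * xi + k * xk) % k := (Nat.add_mul_mod_self_left _ _ _).symm
      _ = (j * yj + k * yk) % k := by rw [hAB]
      _ = (j * yj) % k := Nat.add_mul_mod_self_left _ _ _
      _ = j * yj := Nat.mod_eq_of_lt e2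
  rw [h5] at hAB
  have hxkyk : xk = yk := by
    have := Nat.add_left_cancel hAB
    exact Nat.eq_of_mul_eq_mul_left (by omega) this
  interval_cases xi <;> interval_cases yj <;> simp at h5 ⊢ <;> omega
end

section
/- Let a, d, k be positive integers with gcd(a, d) = 1 and 1 ≤ k ≤ a − 1, and let S = ⟨a, a+d, …, a+kd⟩. If x = m_a·a + m_d·d with integers m_a ≥ 0 and 0 ≤ m_d ≤ a − 1, then x ∈ S if and only if m_a ≥ ⌈m_d / k⌉. -/
/-- Membership in the arithmetic semigroup is equivalent to having a
representation `n*a + m*d` with `m ≤ k*n`. -/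
lemma arith_sg_mem_iff (a d k : ℕ) (hk1 : 1 ≤ k) (x : ℕ) :
    (∃ c : Fin (k + 1) → ℕ, x = ∑ i, c i * (a + (i : ℕ) * d)) ↔
      ∃ n m : ℕ, x = n * a + m * d ∧ m ≤ k * n := by
  constructor
  · rintro ⟨c, rfl⟩
    refine ⟨∑ i, c i, ∑ i, c i * (i : ℕ), ?_, ?_⟩
    · rw [Finset.sum_mul, Finset.sum_mul, ← Finset.sum_add_distrib]
      apply Finset.sum_congr rfl
      intro i _
      ring
    · calc ∑ i, c i * (i : ℕ) ≤ ∑ i, c i * k :=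
            Finset.sum_le_sum fun i _ => Nat.mul_le_mul_left _ (Nat.lt_succ_iff.mp i.isLt)
        _ = k * ∑ i, c i := by rw [← Finset.sum_mul, mul_comm]
  · rintro ⟨n, m, rfl, hm⟩
    set q := m / k with hq
    set r := m % k with hr
    have hrk : r < k := Nat.mod_lt _ hk1
    have hm' : k * q + r = m := Nat.div_add_mod m k
    set s : ℕ := if r = 0 then 0 else 1 with hs
    have hsr : s * r = r := by
      rcases eq_or_ne r 0 with h | h <;> simp [hs, h]
    have hqs : q + s ≤ n := by
      rcases eq_or_ne r 0 with h | h
      · simp only [hs, h, if_pos, add_zero]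
        have : k * q ≤ k * n := by omega
        exact Nat.le_of_mul_le_mul_left this hk1
      · simp only [hs, h, if_neg, Ne, not_false_iff]
        have : k * q < k * n := by omega
        have := Nat.lt_of_mul_lt_mul_left this
        omega
    set p := n - q - s with hp
    have hn : n = p + q + s := by omega
    refine ⟨fun i => (if i = (0 : Fin (k+1)) then p else 0) +
      ((if i = ⟨k, Nat.lt_succ_self k⟩ then q else 0) +
       (if i = ⟨r, by omega⟩ then s else 0)), ?_⟩
    have key : ∀ (j : Fin (k+1)) (v : ℕ),
        ∑ i : Fin (k+1), (if i = j then v else 0) * (a + (i : ℕ) * d)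
          = v * (a + (j : ℕ) * d) := by
      intro j v
      rw [Finset.sum_eq_single j]
      · simp
      · intro b _ hb; simp [hb]
      · simp
    simp only [add_mul, Finset.sum_add_distrib, key]
    have hm2 : m = k * q + s * r := by rw [hsr]; omega
    rw [hn, hm2]
    simp only [Fin.val_zero, Fin.val_mk]
    ring
theorem arithmetic_semigroup_membership_criterion
    (a d k : ℕ) (ha : 0 < a) (hd : 0 < d) (hk1 : 1 ≤ k) (hka : k ≤ a - 1)
    (hgcd : Nat.gcd a d = 1)
    (S : Set ℕ)
    (hS : S = {x : ℕ | ∃ c : Fin (k + 1) → ℕ, x = ∑ i, c i * (a + (i : ℕ) * d)})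
    (x ma md : ℕ) (hmd : md ≤ a - 1) (hx : x = ma * a + md * d) :
    x ∈ S ↔ (ma : ℤ) ≥ ⌈(md : ℚ) / (k : ℚ)⌉ := by
  subst hS hx
  rw [Set.mem_setOf_eq, arith_sg_mem_iff a d k hk1]
  have hceil : ((ma : ℤ) ≥ ⌈(md : ℚ) / (k : ℚ)⌉) ↔ md ≤ k * ma := by
    rw [ge_iff_le, Int.ceil_le, div_le_iff₀ (by positivity : (0:ℚ) < (k:ℚ))]
    push_cast
    constructor
    · intro h
      have h2 : (md:ℚ) ≤ ((k * ma : ℕ) : ℚ) := by push_cast; linarith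
      exact_mod_cast h2
    · intro h
      have : (md:ℚ) ≤ (k * ma : ℕ) := by exact_mod_cast h
      push_cast at this; linarith
  rw [hceil]
  constructor
  · rintro ⟨n, m, heq, hmn⟩
    -- work in ℤ
    have heqZ : (ma : ℤ) * a + md * d = n * a + m * d := by exact_mod_cast heq
    have hco : IsCoprime (a : ℤ) (d : ℤ) := by
      rw [Int.isCoprime_iff_gcd_eq_one]; exact_mod_cast hgcd
    have hdvd : (a : ℤ) ∣ ((m : ℤ) - md) * d := ⟨(ma : ℤ) - n, by linarith [heqZ]⟩
    have hdvd2 : (a : ℤ) ∣ ((m : ℤ) - md) := hco.dvd_of_dvd_mul_right hdvd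
    obtain ⟨t, ht⟩ := hdvd2
    have ht0 : 0 ≤ t := by
      by_contra h
      push_neg at h
      have : (a : ℤ) * t ≤ -a := by
        have : t ≤ -1 := by omega
        nlinarith [Int.natCast_pos.mpr ha]
      have hmd' : (md : ℤ) ≤ a - 1 := by
        have : md ≤ a - 1 := hmd
        omega
      omega
    have hnZ : (n : ℤ) = ma - t * d := by
      have : ((ma : ℤ) - n) * a = (a * t) * d := by rw [← ht]; linarith
      have ha0 : (a : ℤ) ≠ 0 := by exact_mod_cast ha.ne'
      have : ((ma : ℤ) - n) * a = (t * d) * a := by linarith [this]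
      have := mul_right_cancel₀ ha0 this
      linarith
    have hmZ : (m : ℤ) = md + a * t := by linarith [ht]
    have hmnZ : (m : ℤ) ≤ k * n := by exact_mod_cast hmn
    have goalZ : (md : ℤ) ≤ k * ma := by
      rw [hmZ, hnZ] at *
      nlinarith [mul_nonneg ht0 (by positivity : (0:ℤ) ≤ (a:ℤ)),
        mul_nonneg (mul_nonneg (by positivity : (0:ℤ) ≤ (k:ℤ)) ht0)
          (by positivity : (0:ℤ) ≤ (d:ℤ))]
    exact_mod_cast goalZ
  · intro h
    exact ⟨ma, md, rfl, h⟩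
end

section
/- Let a, d, k be positive integers with gcd(a, d) = 1 and 2 ≤ k ≤ a − 1, let S = ⟨a, a+d, …, a+kd⟩, and write a = q k + r with 0 ≤ r < k. Suppose r = 0. Then Ap(S; a) \ {0} = { y_k(a+kd) : y_k ∈ {1, …, q−1} } ∪ { (a+id) + y_k(a+kd) : y_k ∈ {0, …, q−1}, i ∈ {1, …, k−1} }. -/
private lemma apery_single_mem (a d k m n : ℕ) (hm : m ≤ k) :
    ∃ c : Fin (k + 1) → ℕ,
      ((n : ℤ) * ((a : ℤ) + (m : ℤ) * (d : ℤ))) =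
        ∑ i : Fin (k + 1), (c i : ℤ) * ((a : ℤ) + ((i : ℕ) : ℤ) * (d : ℤ)) := by
  refine ⟨fun j => if j = ⟨m, Nat.lt_succ_of_le hm⟩ then n else 0, ?_⟩
  rw [Finset.sum_eq_single (⟨m, Nat.lt_succ_of_le hm⟩ : Fin (k + 1))]
  · simp
  · intro b _ hb; simp [hb]
  · simp

private lemma apery_memS_iff (a d k : ℕ) (S : Set ℤ) (hk : 0 < k)
    (hS : S = {z : ℤ | ∃ c : Fin (k + 1) → ℕ,
      z = ∑ i, (c i : ℤ) * ((a : ℤ) + (i : ℕ) * (d : ℤ))}) (z : ℤ) :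
    z ∈ S ↔ ∃ s t : ℕ, t ≤ k * s ∧ z = (s : ℤ) * a + (t : ℤ) * d := by
  subst hS
  simp only [Set.mem_setOf_eq]
  constructor
  · rintro ⟨c, rfl⟩
    refine ⟨∑ i, c i, ∑ i, c i * (i : ℕ), ?_, ?_⟩
    · calc ∑ i, c i * (i : ℕ) ≤ ∑ i : Fin (k+1), c i * k :=
            Finset.sum_le_sum fun i _ => Nat.mul_le_mul_left _ (Nat.le_of_lt_succ i.isLt)
        _ = k * ∑ i, c i := by rw [← Finset.sum_mul, Nat.mul_comm]
    · push_cast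
      rw [Finset.sum_mul, Finset.sum_mul, ← Finset.sum_add_distrib]
      exact Finset.sum_congr rfl fun i _ => by ring
  · rintro ⟨s, t, hts, rfl⟩
    have hdm : k * (t / k) + t % k = t := Nat.div_add_mod t k
    set u := t / k with hu
    set v := t % k with hv
    have hvk : v < k := Nat.mod_lt _ hk
    have hus : u ≤ s := by
      have h1 : t / k ≤ k * s / k := Nat.div_le_div_right hts
      rwa [Nat.mul_div_cancel_left s hk] at h1
    set e : ℕ := if v = 0 then 0 else 1 with he
    have hue : u + e ≤ s := by
      rcases Nat.eq_zero_or_pos v with h | h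
      · simp [he, h, hus]
      · have h1 : k * u < k * s := by omega
        have h2 := Nat.lt_of_mul_lt_mul_left h1
        simp only [he]
        rw [if_neg (Nat.pos_iff_ne_zero.mp h)]
        omega
    obtain ⟨c0, h0⟩ := apery_single_mem a d k 0 (s - u - e) (Nat.zero_le k)
    obtain ⟨c1, h1⟩ := apery_single_mem a d k v e (le_of_lt hvk)
    obtain ⟨c2, h2⟩ := apery_single_mem a d k k u le_rfl
    refine ⟨fun j => c0 j + c1 j + c2 j, ?_⟩
    have hev : (e : ℤ) * v = v := by
      rcases Nat.eq_zero_or_pos v with h | h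
      · simp [h]
      · simp [he, Nat.pos_iff_ne_zero.mp h]
    have htz : (t : ℤ) = k * u + v := by exact_mod_cast hdm.symm
    have hcast : ((s - u - e : ℕ) : ℤ) = (s : ℤ) - u - e := by
      have h3 : e ≤ s - u := by omega
      rw [Nat.cast_sub h3, Nat.cast_sub hus]
    have key : (s : ℤ) * a + (t : ℤ) * d =
        ((s - u - e : ℕ) : ℤ) * ((a : ℤ) + ((0 : ℕ) : ℤ) * d) + (e : ℤ) * ((a : ℤ) + (v : ℤ) * d)
          + (u : ℤ) * ((a : ℤ) + (k : ℤ) * d) := by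
      rw [hcast, htz]
      linear_combination (-(d : ℤ)) * hev
    rw [key, h0, h1, h2]
    push_cast
    rw [← Finset.sum_add_distrib, ← Finset.sum_add_distrib]
    exact Finset.sum_congr rfl fun i _ => by ring

private lemma apery_not_mem_aux (a d k : ℕ) (ha : 0 < a) (hd : 0 < d) (hk : 0 < k)
    (hgcd : Nat.gcd a d = 1) (s0 t : ℕ) (ht1 : 1 ≤ t) (hta : t + 1 ≤ a)
    (hks : k * s0 < t + k) :
    ¬ ∃ s t' : ℕ, t' ≤ k * s ∧
        (s0 : ℤ) * a + (t : ℤ) * d - a = (s : ℤ) * a + (t' : ℤ) * d := by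
  rintro ⟨s, t', hts, heq⟩
  have ha' : (0 : ℤ) < a := by exact_mod_cast ha
  have hd' : (0 : ℤ) < d := by exact_mod_cast hd
  have hk' : (0 : ℤ) < k := by exact_mod_cast hk
  have hts' : (t' : ℤ) ≤ (k : ℤ) * s := by exact_mod_cast hts
  have hks' : (k : ℤ) * s0 < (t : ℤ) + k := by exact_mod_cast hks
  have hta' : (t : ℤ) + 1 ≤ a := by exact_mod_cast hta
  have ht'0 : (0 : ℤ) ≤ t' := Int.natCast_nonneg t'
  have hco : IsCoprime (a : ℤ) (d : ℤ) := by
    rw [Int.isCoprime_iff_gcd_eq_one, Int.gcd_natCast_natCast]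
    exact hgcd
  have hdvd : (a : ℤ) ∣ ((t : ℤ) - t') * d :=
    ⟨(s : ℤ) - s0 + 1, by linear_combination heq⟩
  obtain ⟨m, hm⟩ := hco.dvd_of_dvd_mul_right hdvd
  have hm0 : m ≤ 0 := by nlinarith
  have hs : (s : ℤ) = (s0 : ℤ) - 1 + m * d := by
    have h2 : (s : ℤ) * a = ((s0 : ℤ) - 1 + m * d) * a := by
      linear_combination (-1 : ℤ) * heq + (d : ℤ) * hm
    exact mul_right_cancel₀ (ne_of_gt ha') h2
  have hks2 : (k : ℤ) * s = k * s0 - k + k * (m * d) := by rw [hs]; ring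
  have hexp : m * ((a : ℤ) + k * d) = a * m + k * (m * d) := by ring
  have hnn : m * ((a : ℤ) + k * d) ≤ 0 := by
    have hpos : (0 : ℤ) ≤ (a : ℤ) + k * d := by positivity
    nlinarith
  linarith [hts', hks', hm, hks2, hexp, hnn]

theorem apery_set_arithmetic_r_eq_zero
    (a d k q r : ℕ) (ha : 0 < a) (hd : 0 < d) (hk2 : 2 ≤ k) (hka : k ≤ a - 1)
    (hgcd : Nat.gcd a d = 1)
    (hqr : a = q * k + r) (hrk : r < k) (hr : r = 0)
    (S : Set ℤ)
    (hS : S = {z : ℤ | ∃ c : Fin (k + 1) → ℕ,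
      z = ∑ i, (c i : ℤ) * ((a : ℤ) + (i : ℕ) * (d : ℤ))}) :
    {x : ℤ | x ∈ S ∧ x - a ∉ S} \ {0} =
      {z : ℤ | ∃ yk : ℕ, 1 ≤ yk ∧ yk ≤ q - 1 ∧ z = (yk : ℤ) * ((a : ℤ) + k * d)} ∪
      {z : ℤ | ∃ i yk : ℕ, 1 ≤ i ∧ i ≤ k - 1 ∧ yk ≤ q - 1 ∧
        z = ((a : ℤ) + i * d) + (yk : ℤ) * ((a : ℤ) + k * d)} := by
  subst hr
  have haqk : a = k * q := by rw [Nat.mul_comm k q]; omega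
  have hk : 0 < k := by omega
  have hq2 : 2 ≤ q := by
    by_contra h
    push_neg at h
    have h1 : q * k ≤ 1 * k := Nat.mul_le_mul_right k (by omega)
    omega
  have hmem := apery_memS_iff a d k S hk hS
  have hnm : ∀ s0 t : ℕ, 1 ≤ t → t + 1 ≤ a → k * s0 < t + k →
      ((s0 : ℤ) * a + (t : ℤ) * d - a) ∉ S := fun s0 t h1 h2 h3 hc =>
    apery_not_mem_aux a d k ha hd hk hgcd s0 t h1 h2 h3 ((hmem _).mp hc)
  ext z
  simp only [Set.mem_diff, Set.mem_union, Set.mem_setOf_eq, Set.mem_singleton_iff]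
  constructor
  · rintro ⟨⟨hzS, hznS⟩, hz0⟩
    obtain ⟨s, t, hts, hzeq⟩ := (hmem z).mp hzS
    clear hzS
    induction t using Nat.strong_induction_on generalizing s with
    | _ t ih =>
      by_cases hta : a ≤ t
      · exact ih (t - a) (by omega) (s + d)
          (by
            have : t - a ≤ k * s := le_trans (Nat.sub_le t a) hts
            calc t - a ≤ k * s := this
              _ ≤ k * (s + d) := Nat.mul_le_mul_left k (Nat.le_add_right s d))
          (by rw [hzeq]; push_cast [Nat.cast_sub hta]; ring)
      · push_neg at hta
        rcases Nat.eq_zero_or_pos t with ht0 | ht1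
        · -- t = 0 : z = s*a ; s = 0 gives z = 0, else z - a ∈ S
          subst ht0
          rcases Nat.eq_zero_or_pos s with hs0 | hs1
          · exfalso; apply hz0; rw [hzeq, hs0]; push_cast; ring
          · exfalso
            apply hznS
            refine (hmem _).mpr ⟨s - 1, 0, by omega, ?_⟩
            rw [hzeq, Nat.cast_sub hs1]
            push_cast; ring
        · -- 1 ≤ t < a
          have hs1 : 1 ≤ s := by
            rcases Nat.eq_zero_or_pos s with h | h
            · subst h; simp at hts; omega
            · exact h
          obtain ⟨s', rfl⟩ : ∃ s', s = s' + 1 := ⟨s - 1, by omega⟩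
          by_cases hcase : t ≤ k * s'
          · exfalso
            apply hznS
            refine (hmem _).mpr ⟨s', t, hcase, ?_⟩
            rw [hzeq]; push_cast; ring
          · push_neg at hcase
            have hdm : k * (t / k) + t % k = t := Nat.div_add_mod t k
            set u := t / k with hu
            set v := t % k with hv
            have hvk : v < k := Nat.mod_lt _ hk
            have hts2 : t ≤ k * s' + k := by
              have : k * (s' + 1) = k * s' + k := by ring
              omega
            have hsu : s' ≤ u := by
              have h1 : k * s' < k * (u + 1) := by
                have : k * (u + 1) = k * u + k := by ring
                omega
              have h2 := Nat.lt_of_mul_lt_mul_left h1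
              omega
            have hus : u ≤ s' + 1 := by
              have h1 : k * u ≤ k * (s' + 1) := by
                have : k * (s' + 1) = k * s' + k := by ring
                omega
              exact Nat.le_of_mul_le_mul_left h1 hk
            rcases Nat.eq_zero_or_pos v with hv0 | hv1
            · -- k ∣ t : left set
              have htu : t = k * u := by omega
              have hsu2 : s' + 1 ≤ u := by
                have h1 : k * s' < k * u := by omega
                have := Nat.lt_of_mul_lt_mul_left h1
                omega
              have huq : u < q := by
                have h1 : k * u < k * q := by omega
                exact Nat.lt_of_mul_lt_mul_left h1
              left
              refine ⟨u, by omega, by omega, ?_⟩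
              have hse : s' + 1 = u := by omega
              have htz : (t : ℤ) = (k : ℤ) * u := by exact_mod_cast htu
              rw [hzeq, htz, ← hse]
              push_cast; ring
            · -- right set
              have hsu2 : u ≤ s' := by
                have h1 : k * u < k * (s' + 1) := by
                  have : k * (s' + 1) = k * s' + k := by ring
                  omega
                have := Nat.lt_of_mul_lt_mul_left h1
                omega
              have hse : s' = u := by
                have h1 : k * s' < k * (u + 1) := by
                  have : k * (u + 1) = k * u + k := by ring
                  omega
                have := Nat.lt_of_mul_lt_mul_left h1
                omega
              have huq : u < q := by
                have h1 : k * u < k * q := by omega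
                exact Nat.lt_of_mul_lt_mul_left h1
              right
              refine ⟨v, u, hv1, by omega, by omega, ?_⟩
              have htz : (t : ℤ) = (k : ℤ) * u + v := by exact_mod_cast hdm.symm
              rw [hzeq, htz, hse]
              push_cast; ring
  · rintro (⟨y, hy1, hyq, rfl⟩ | ⟨i, y, hi1, hik, hyq, rfl⟩)
    · have hq1 : 1 ≤ q := by omega
      have hyk1 : 1 ≤ y * k := Nat.one_le_iff_ne_zero.mpr (by positivity)
      have hyka : y * k + 1 ≤ a := by
        have h1 : y * k ≤ (q - 1) * k := Nat.mul_le_mul_right k hyq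
        have h2 : (q - 1) * k + k = q * k := by
          rw [Nat.sub_mul, one_mul, Nat.sub_add_cancel (Nat.le_mul_of_pos_left k hq1)]
        have h3 : a = q * k := by omega
        omega
      refine ⟨⟨?_, ?_⟩, ?_⟩
      · refine (hmem _).mpr ⟨y, y * k, le_of_eq (Nat.mul_comm y k), ?_⟩
        push_cast; ring
      · have h := hnm y (y * k) hyk1 hyka
          (by rw [Nat.mul_comm k y]; exact Nat.lt_add_of_pos_right hk)
        have he : (y : ℤ) * ((a : ℤ) + k * d) - a = (y : ℤ) * a + ((y * k : ℕ) : ℤ) * d - a := by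
          push_cast; ring
        rw [he]; exact h
      · have hy' : (0 : ℤ) < y := by exact_mod_cast hy1
        have : (0 : ℤ) < (y : ℤ) * ((a : ℤ) + k * d) := by positivity
        exact ne_of_gt this
    · have hq1 : 1 ≤ q := by
        rcases Nat.eq_zero_or_pos q with h | h
        · exfalso; omega
        · exact h
      have ht1 : 1 ≤ i + y * k := le_trans hi1 (Nat.le_add_right i (y * k))
      have hta : i + y * k + 1 ≤ a := by
        have h1 : y * k ≤ (q - 1) * k := Nat.mul_le_mul_right k hyq
        have h2 : (q - 1) * k + k = q * k := by
          rw [Nat.sub_mul, one_mul, Nat.sub_add_cancel (Nat.le_mul_of_pos_left k hq1)]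
        have h3 : a = q * k := by omega
        omega
      have hkst : k * (y + 1) < i + y * k + k := by
        have : k * (y + 1) = y * k + k := by ring
        omega
      have htks : i + y * k ≤ k * (y + 1) := by
        have : k * (y + 1) = y * k + k := by ring
        omega
      refine ⟨⟨?_, ?_⟩, ?_⟩
      · refine (hmem _).mpr ⟨y + 1, i + y * k, htks, ?_⟩
        push_cast; ring
      · have h := hnm (y + 1) (i + y * k) ht1 hta hkst
        have he : (a : ℤ) + i * d + (y : ℤ) * ((a : ℤ) + k * d) - a =
            ((y + 1 : ℕ) : ℤ) * a + ((i + y * k : ℕ) : ℤ) * d - a := by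
          push_cast; ring
        rw [he]; exact h
      · have h1 : (0 : ℤ) < (a : ℤ) + i * d := by positivity
        have h2 : (0 : ℤ) ≤ (y : ℤ) * ((a : ℤ) + k * d) := by positivity
        intro hcon
        linarith
end

section
/- Let a, d, k be positive integers with gcd(a, d) = 1 and 2 ≤ k ≤ a − 1, let S = ⟨a, a+d, …, a+kd⟩, and write a = q k + r with 0 ≤ r < k. Suppose r = 1. Then Ap(S; a) \ {0} = { y_k(a+kd) : y_k ∈ {1, …, q} } ∪ { (a+id) + y_k(a+kd) : y_k ∈ {0, …, q−1}, i ∈ {1, …, k−1} }. -/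
lemma ap_sum_eq (a d k : ℕ) (c : Fin (k+1) → ℕ) :
    ∑ i : Fin (k+1), (c i : ℤ) * ((a:ℤ) + (i:ℕ) * d)
      = ((∑ i : Fin (k+1), c i : ℕ) : ℤ) * a + ((∑ i : Fin (k+1), (i:ℕ) * c i : ℕ) : ℤ) * d := by
  push_cast
  rw [Finset.sum_mul, Finset.sum_mul, ← Finset.sum_add_distrib]
  exact Finset.sum_congr rfl fun i _ => by ring

lemma ap_rep (a d k : ℕ) (z : ℤ)
    (h : ∃ c : Fin (k + 1) → ℕ, z = ∑ i, (c i : ℤ) * ((a : ℤ) + (i : ℕ) * (d : ℤ))) :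
    ∃ m t : ℕ, t ≤ m * k ∧ z = (m:ℤ) * a + (t:ℤ) * d := by
  obtain ⟨c, hz⟩ := h
  refine ⟨∑ i, c i, ∑ i : Fin (k+1), (i:ℕ) * c i, ?_, by rw [hz, ap_sum_eq]⟩
  calc ∑ i : Fin (k+1), (i:ℕ) * c i ≤ ∑ i : Fin (k+1), k * c i :=
        Finset.sum_le_sum fun i _ => Nat.mul_le_mul_right _ (Nat.lt_succ_iff.mp i.isLt)
    _ = (∑ i, c i) * k := by rw [← Finset.mul_sum]; ring

lemma ap_mem (a d k : ℕ) (m t : ℕ) (h : t ≤ m * k) :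
    ∃ c : Fin (k+1) → ℕ, ((m:ℤ) * a + (t:ℤ) * d) = ∑ i, (c i : ℤ) * ((a:ℤ) + (i:ℕ) * d) := by
  induction m generalizing t with
  | zero =>
      have ht : t = 0 := by omega
      subst ht
      exact ⟨0, by simp⟩
  | succ m ih =>
      rw [Nat.succ_mul] at h
      set j := min t k with hj
      have hj1 : j ≤ t := min_le_left _ _
      have hj2 : j ≤ k := min_le_right _ _
      have hj3 : t - j ≤ m * k := by omega
      obtain ⟨c, hc⟩ := ih (t - j) hj3
      refine ⟨fun i => c i + if (i:ℕ) = j then 1 else 0, ?_⟩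
      have hfin : ∀ i : Fin (k+1), ((i:ℕ) = j) ↔ (i = (⟨j, by omega⟩ : Fin (k+1))) := by
        intro i; rw [Fin.ext_iff]
      have key : ∑ i : Fin (k+1), (((c i + if (i:ℕ) = j then 1 else 0 : ℕ)):ℤ) * ((a:ℤ) + (i:ℕ) * d)
          = (∑ i : Fin (k+1), (c i:ℤ) * ((a:ℤ) + (i:ℕ)*d)) + ((a:ℤ) + (j:ℕ)*d) := by
        push_cast
        simp only [add_mul, ite_mul, one_mul, zero_mul]
        rw [Finset.sum_add_distrib]
        congr 1
        simp only [hfin]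
        rw [Finset.sum_ite_eq' Finset.univ (⟨j, by omega⟩ : Fin (k+1))
          (fun i => (a:ℤ) + (i:ℕ)*d)]
        simp
      rw [key, ← hc]
      have hcast : ((t - j : ℕ) : ℤ) = (t:ℤ) - j := by push_cast [hj1]; ring
      rw [hcast]
      push_cast
      ring

lemma ap_notmem (a d k q Y T : ℕ) (hd : 0 < d) (hk : 0 < k)
    (hgcd : Nat.gcd a d = 1) (haqk : a = q * k + 1)
    (hY : Y + 1 ≤ q) (hT1 : Y * k < T) (hT2 : T < a) :
    ¬ ∃ m t : ℕ, t ≤ m * k ∧ ((Y:ℤ) * a + (T:ℤ) * d) = (m:ℤ) * a + (t:ℤ) * d := by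
  rintro ⟨m, t, htm, heq⟩
  have haa : 0 < a := by rw [haqk]; exact Nat.succ_pos _
  have ha0 : (0:ℤ) < a := by exact_mod_cast haa
  have h1 : ((t:ℤ) - T) * d = ((Y:ℤ) - m) * a := by linarith
  have hco : IsCoprime (a:ℤ) (d:ℤ) := by
    rw [Int.isCoprime_iff_gcd_eq_one]; simpa using hgcd
  have hdvd : (a:ℤ) ∣ ((t:ℤ) - T) :=
    hco.dvd_of_dvd_mul_right ⟨(Y:ℤ) - m, by linarith⟩
  obtain ⟨s, hs⟩ := hdvd
  have hm : (m:ℤ) = (Y:ℤ) - d * s := by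
    have h2 : (a:ℤ) * (s * d) = (a:ℤ) * ((Y:ℤ) - m) := by
      rw [← mul_assoc, ← hs]; linarith
    have h3 := mul_left_cancel₀ (ne_of_gt ha0) h2
    linarith
  have hca : (a:ℤ) = (q:ℤ) * k + 1 := by exact_mod_cast congrArg (Nat.cast : ℕ → ℤ) haqk
  have htk : (t:ℤ) ≤ (m:ℤ) * k := by exact_mod_cast htm
  have hT1' : (Y:ℤ) * k < (T:ℤ) := by exact_mod_cast hT1
  have hT2' : (T:ℤ) < a := by exact_mod_cast hT2
  have hY' : (Y:ℤ) + 1 ≤ q := by exact_mod_cast hY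
  have hd' : (1:ℤ) ≤ d := by exact_mod_cast hd
  have hk' : (1:ℤ) ≤ k := by exact_mod_cast hk
  have ht0 : (0:ℤ) ≤ t := Int.natCast_nonneg t
  have hT0 : (0:ℤ) ≤ T := Int.natCast_nonneg T
  rcases lt_trichotomy s 0 with h | h | h
  · have hs1 : s ≤ -1 := by omega
    have hb : (a:ℤ) * s ≤ (a:ℤ) * (-1) := mul_le_mul_of_nonneg_left hs1 ha0.le
    linarith
  · subst h
    have ht : (t:ℤ) = T := by linarith [hs]
    have hmY : (m:ℤ) = Y := by simpa using hm
    rw [ht, hmY] at htk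
    linarith
  · have hs1 : (1:ℤ) ≤ s := h
    have hds : (1:ℤ) ≤ d * s := one_le_mul_of_one_le_of_one_le hd' hs1
    have hb : (a:ℤ) * 1 ≤ (a:ℤ) * s := mul_le_mul_of_nonneg_left hs1 ha0.le
    have hta : (a:ℤ) ≤ t := by linarith
    have hm1 : (m:ℤ) ≤ (Y:ℤ) - 1 := by linarith
    have h2 : (m:ℤ) * k ≤ ((Y:ℤ) - 1) * k :=
      mul_le_mul_of_nonneg_right hm1 (by linarith)
    have h3 : ((Y:ℤ) - 1) * k ≤ ((q:ℤ) - 2) * k :=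
      mul_le_mul_of_nonneg_right (by linarith) (by linarith)
    have h4 : ((q:ℤ) - 2) * k = (q:ℤ) * k - 2 * k := by ring
    linarith

theorem apery_set_arithmetic_r_eq_one
    (a d k q r : ℕ) (ha : 0 < a) (hd : 0 < d) (hk2 : 2 ≤ k) (hka : k ≤ a - 1)
    (hgcd : Nat.gcd a d = 1)
    (hqr : a = q * k + r) (hrk : r < k) (hr : r = 1)
    (S : Set ℤ)
    (hS : S = {z : ℤ | ∃ c : Fin (k + 1) → ℕ,
      z = ∑ i, (c i : ℤ) * ((a : ℤ) + (i : ℕ) * (d : ℤ))}) :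
    {x : ℤ | x ∈ S ∧ x - a ∉ S} \ {0} =
      {z : ℤ | ∃ yk : ℕ, 1 ≤ yk ∧ yk ≤ q ∧ z = (yk : ℤ) * ((a : ℤ) + k * d)} ∪
      {z : ℤ | ∃ i yk : ℕ, 1 ≤ i ∧ i ≤ k - 1 ∧ yk ≤ q - 1 ∧
        z = ((a : ℤ) + i * d) + (yk : ℤ) * ((a : ℤ) + k * d)} := by
  subst hr
  have hk0 : 0 < k := by omega
  have hq1 : 1 ≤ q := by
    rcases Nat.eq_zero_or_pos q with h | h
    · subst h; simp at hqr; omega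
    · exact h
  have hmemS : ∀ m t : ℕ, t ≤ m * k → ((m:ℤ) * a + (t:ℤ) * d) ∈ S := by
    intro m t h; rw [hS]; exact ap_mem a d k m t h
  have hrepS : ∀ z ∈ S, ∃ m t : ℕ, t ≤ m * k ∧ z = (m:ℤ) * a + (t:ℤ) * d := by
    intro z hz; exact ap_rep a d k z (by rwa [hS] at hz)
  have hnot : ∀ Y T : ℕ, Y + 1 ≤ q → Y * k < T → T < a → ((Y:ℤ) * a + (T:ℤ) * d) ∉ S := by
    intro Y T h1 h2 h3 hz
    exact ap_notmem a d k q Y T hd hk0 hgcd hqr h1 h2 h3 (hrepS _ hz)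
  ext x
  simp only [Set.mem_diff, Set.mem_setOf_eq, Set.mem_union, Set.mem_singleton_iff]
  constructor
  · rintro ⟨⟨hxS, hxnot⟩, hx0⟩
    obtain ⟨m, t, htm, hx⟩ := hrepS x hxS
    have hm1 : 1 ≤ m := by
      rcases Nat.eq_zero_or_pos m with h | h
      · exfalso; apply hx0; subst h
        have ht : t = 0 := by simpa using htm
        simp [hx, ht]
      · exact h
    obtain ⟨m', rfl⟩ : ∃ m', m = m' + 1 := ⟨m - 1, by omega⟩
    rw [Nat.succ_mul] at htm
    have ht1 : m' * k < t := by
      by_contra hcon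
      push_neg at hcon
      apply hxnot
      have hx2 : x - a = ((m':ℤ) * a + (t:ℤ) * d) := by rw [hx]; push_cast; ring
      rw [hx2]; exact hmemS m' t hcon
    have hmq : m' + 1 ≤ q := by
      by_contra hcon
      push_neg at hcon
      have hqm : q ≤ m' := by omega
      have hqk : q * k ≤ m' * k := Nat.mul_le_mul_right _ hqm
      have hta : a ≤ t := by omega
      apply hxnot
      have hx2 : x - a = (((m' + d : ℕ)):ℤ) * a + (((t - a : ℕ)):ℤ) * d := by
        rw [hx]; push_cast [hta]; ring
      rw [hx2]
      apply hmemS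
      calc t - a ≤ t := Nat.sub_le _ _
        _ ≤ (m' + 1) * k := by rw [Nat.succ_mul]; omega
        _ ≤ (m' + d) * k := Nat.mul_le_mul_right _ (by omega)
    obtain ⟨i, rfl⟩ : ∃ i, t = m' * k + i := ⟨t - m' * k, by omega⟩
    by_cases hik : i = k
    · left
      refine ⟨m' + 1, by omega, hmq, ?_⟩
      rw [hx, hik]
      push_cast [Nat.succ_mul]
      ring
    · right
      refine ⟨i, m', by omega, by omega, by omega, ?_⟩
      rw [hx]
      push_cast
      ring
  · rintro (⟨y, hy1, hyq, rfl⟩ | ⟨i, y, hi1, hik, hyq, rfl⟩)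
    · obtain ⟨y', rfl⟩ : ∃ y', y = y' + 1 := ⟨y - 1, by omega⟩
      have hyk : (y' + 1) * k < a := by
        have := Nat.mul_le_mul_right k hyq
        omega
      refine ⟨⟨?_, ?_⟩, ?_⟩
      · have h := hmemS (y' + 1) ((y' + 1) * k) le_rfl
        have heq : ((y' + 1 : ℕ):ℤ) * ((a:ℤ) + k * d)
            = ((y' + 1 : ℕ):ℤ) * a + (((y' + 1) * k : ℕ):ℤ) * d := by push_cast; ring
        rw [heq]; exact h
      · have heq : ((y' + 1 : ℕ):ℤ) * ((a:ℤ) + k * d) - a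
            = ((y' : ℕ):ℤ) * a + (((y' + 1) * k : ℕ):ℤ) * d := by push_cast; ring
        rw [heq]
        exact hnot y' ((y' + 1) * k) (by omega)
          (by rw [Nat.succ_mul]; omega) hyk
      · have hy' : (1:ℤ) ≤ ((y' + 1 : ℕ):ℤ) := by exact_mod_cast Nat.succ_le_succ (Nat.zero_le y')
        have ha' : (1:ℤ) ≤ (a:ℤ) := by exact_mod_cast ha
        have hkd : (0:ℤ) ≤ (k:ℤ) * d := by positivity
        intro h0
        nlinarith
    · have hyk : y * k + i < a := by
        have h1 : y * k ≤ (q - 1) * k := Nat.mul_le_mul_right _ hyq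
        have h2 : (q - 1) * k = q * k - 1 * k := by rw [Nat.sub_mul]
        have h3 : 1 * k ≤ q * k := Nat.mul_le_mul_right _ hq1
        omega
      refine ⟨⟨?_, ?_⟩, ?_⟩
      · have h := hmemS (y + 1) (y * k + i) (by rw [Nat.succ_mul]; omega)
        have heq : ((a:ℤ) + (i:ℕ) * d) + (y:ℤ) * ((a:ℤ) + k * d)
            = ((y + 1 : ℕ):ℤ) * a + ((y * k + i : ℕ):ℤ) * d := by push_cast; ring
        rw [heq]; exact h
      · have heq : ((a:ℤ) + (i:ℕ) * d) + (y:ℤ) * ((a:ℤ) + k * d) - a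
            = ((y : ℕ):ℤ) * a + ((y * k + i : ℕ):ℤ) * d := by push_cast; ring
        rw [heq]
        exact hnot y (y * k + i) (by omega) (by omega) hyk
      · have ha' : (1:ℤ) ≤ (a:ℤ) := by exact_mod_cast ha
        have hi' : (0:ℤ) ≤ (i:ℤ) * d := by positivity
        have hy' : (0:ℤ) ≤ (y:ℤ) := Int.natCast_nonneg y
        have hkd : (0:ℤ) ≤ (k:ℤ) * d := by positivity
        intro h0
        nlinarith
end
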